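/- arXiv:1610.06461 — 2 statements merged into one kernel-verified Lean document; each statement's English description precedes it below -/
import Mathlib

section
/- If A satisfies RIP of order 2s with constant δ_{2s}, then for any two s-sparse vectors u, v with disjoint supports, |⟨Au, Av⟩| ≤ δ_{2s}‖u‖₂‖v‖₂. -/
open Finset Real

noncomputable def l2 {m : ℕ} (x : Fin m → ℝ) : ℝ := Real.sqrt (∑ i, x i ^ 2)

noncomputable def l1 {m : ℕ} (x : Fin m → ℝ) : ℝ := ∑ i, |x i|

def IsSparse {m : ℕ} (s : ℕ) (x : Fin m → ℝ) : Prop :=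
  (Finset.univ.filter fun i => x i ≠ 0).card ≤ s

lemma l2_sq {m : ℕ} (x : Fin m → ℝ) : l2 x ^ 2 = ∑ i, x i ^ 2 :=
  Real.sq_sqrt (by positivity)

lemma sparse_comb {m s : ℕ} {u v : Fin m → ℝ} (hu : IsSparse s u) (hv : IsSparse s v)
    (c d : ℝ) : IsSparse (2 * s) (c • u + d • v) := by
  unfold IsSparse at *
  have hsub : (Finset.univ.filter fun i => (c • u + d • v) i ≠ 0) ⊆
      (Finset.univ.filter fun i => u i ≠ 0) ∪ (Finset.univ.filter fun i => v i ≠ 0) := by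
    intro i hi
    simp only [Finset.mem_filter, Finset.mem_univ, true_and, Pi.add_apply, Pi.smul_apply,
      smul_eq_mul, Finset.mem_union] at hi ⊢
    by_contra h
    push_neg at h
    simp [h.1, h.2] at hi
  calc (Finset.univ.filter fun i => (c • u + d • v) i ≠ 0).card
      ≤ ((Finset.univ.filter fun i => u i ≠ 0) ∪ (Finset.univ.filter fun i => v i ≠ 0)).card :=
        Finset.card_le_card hsub
    _ ≤ (Finset.univ.filter fun i => u i ≠ 0).card + (Finset.univ.filter fun i => v i ≠ 0).card :=
        Finset.card_union_le _ _
    _ ≤ s + s := add_le_add hu hv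
    _ = 2 * s := (two_mul s).symm

theorem stmt1 {n p s : ℕ} (A : Matrix (Fin n) (Fin p) ℝ) (δ : ℝ)
    (hRIP : ∀ x : Fin p → ℝ, IsSparse (2 * s) x →
      (1 - δ) * l2 x ^ 2 ≤ l2 (A.mulVec x) ^ 2 ∧ l2 (A.mulVec x) ^ 2 ≤ (1 + δ) * l2 x ^ 2)
    (u v : Fin p → ℝ) (hu : IsSparse s u) (hv : IsSparse s v)
    (hdisj : ∀ i, u i = 0 ∨ v i = 0) :
    |∑ i, A.mulVec u i * A.mulVec v i| ≤ δ * l2 u * l2 v := by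
  classical
  set a := l2 u with ha_def
  set b := l2 v with hb_def
  have ha : 0 ≤ a := Real.sqrt_nonneg _
  have hb : 0 ≤ b := Real.sqrt_nonneg _
  have ha2 : a ^ 2 = ∑ i, u i ^ 2 := l2_sq u
  have hb2 : b ^ 2 = ∑ i, v i ^ 2 := l2_sq v
  have huv : ∑ i, u i * v i = 0 :=
    Finset.sum_eq_zero fun i _ => by rcases hdisj i with h | h <;> simp [h]
  by_cases hab : a * b = 0
  · rcases mul_eq_zero.mp hab with h | h
    · have hu0 : ∀ i, u i = 0 := by
        intro i
        have hs : ∑ i, u i ^ 2 = 0 := by rw [← ha2, h]; ring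
        have := (Finset.sum_eq_zero_iff_of_nonneg (fun i _ => sq_nonneg (u i))).mp hs i
          (Finset.mem_univ i)
        exact pow_eq_zero_iff (two_ne_zero) |>.mp this
      have hAz : ∀ i, A.mulVec u i = 0 := by
        intro i
        simp [Matrix.mulVec, dotProduct, hu0]
      simp [hAz, h]
    · have hv0 : ∀ i, v i = 0 := by
        intro i
        have hs : ∑ i, v i ^ 2 = 0 := by rw [← hb2, h]; ring
        have := (Finset.sum_eq_zero_iff_of_nonneg (fun i _ => sq_nonneg (v i))).mp hs i
          (Finset.mem_univ i)
        exact pow_eq_zero_iff (two_ne_zero) |>.mp this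
      have hAz : ∀ i, A.mulVec v i = 0 := by
        intro i
        simp [Matrix.mulVec, dotProduct, hv0]
      simp [hAz, h]
  · have habpos : 0 < a * b := lt_of_le_of_ne (mul_nonneg ha hb) (Ne.symm hab)
    set w1 : Fin p → ℝ := b • u + a • v with hw1_def
    set w2 : Fin p → ℝ := b • u + (-a) • v with hw2_def
    have hsp1 := sparse_comb hu hv b a
    have hsp2 := sparse_comb hu hv b (-a)
    have h1 := hRIP w1 hsp1
    have h2 := hRIP w2 hsp2
    -- norms of w1, w2
    have e1 : l2 w1 ^ 2 = 2 * (a ^ 2 * b ^ 2) := by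
      rw [l2_sq]
      have : ∀ i, w1 i ^ 2 = b ^ 2 * u i ^ 2 + a ^ 2 * v i ^ 2 + (2 * (a * b)) * (u i * v i) := by
        intro i; simp only [hw1_def, Pi.add_apply, Pi.smul_apply, smul_eq_mul]; ring
      rw [Finset.sum_congr rfl fun i _ => this i]
      simp only [Finset.sum_add_distrib, ← Finset.mul_sum]
      rw [← ha2, ← hb2, huv]; ring
    have e2 : l2 w2 ^ 2 = 2 * (a ^ 2 * b ^ 2) := by
      rw [l2_sq]
      have : ∀ i, w2 i ^ 2 = b ^ 2 * u i ^ 2 + a ^ 2 * v i ^ 2 - (2 * (a * b)) * (u i * v i) := by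
        intro i; simp only [hw2_def, Pi.add_apply, Pi.smul_apply, smul_eq_mul]; ring
      rw [Finset.sum_congr rfl fun i _ => this i]
      simp only [Finset.sum_sub_distrib, Finset.sum_add_distrib, ← Finset.mul_sum]
      rw [← ha2, ← hb2, huv]; ring
    -- polarization
    have hAw1 : A.mulVec w1 = b • A.mulVec u + a • A.mulVec v := by
      simp [hw1_def, Matrix.mulVec_add, Matrix.mulVec_smul]
    have hAw2 : A.mulVec w2 = b • A.mulVec u + (-a) • A.mulVec v := by
      simp [hw2_def, Matrix.mulVec_add, Matrix.mulVec_smul, Matrix.mulVec_neg]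
    have epol : l2 (A.mulVec w1) ^ 2 - l2 (A.mulVec w2) ^ 2 =
        4 * (a * b) * ∑ i, A.mulVec u i * A.mulVec v i := by
      rw [l2_sq, l2_sq, hAw1, hAw2, ← Finset.sum_sub_distrib, Finset.mul_sum]
      apply Finset.sum_congr rfl
      intro i _
      simp only [Pi.add_apply, Pi.smul_apply, smul_eq_mul]
      ring
    have key1 : 4 * (a * b) * ∑ i, A.mulVec u i * A.mulVec v i ≤ 4 * (δ * (a ^ 2 * b ^ 2)) := by
      rw [← epol]
      have := h1.2
      have := h2.1
      rw [e1] at h1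
      rw [e2] at h2
      nlinarith [h1.2, h2.1]
    have key2 : -(4 * (δ * (a ^ 2 * b ^ 2))) ≤ 4 * (a * b) * ∑ i, A.mulVec u i * A.mulVec v i := by
      rw [← epol]
      rw [e1] at h1
      rw [e2] at h2
      nlinarith [h1.1, h2.2]
    have habs : (a * b) * |∑ i, A.mulVec u i * A.mulVec v i| ≤ (a * b) * (δ * (a * b)) := by
      have h' : (a * b) * |∑ i, A.mulVec u i * A.mulVec v i| =
          |(a * b) * ∑ i, A.mulVec u i * A.mulVec v i| := by
        rw [abs_mul, abs_of_pos habpos]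
      rw [h', abs_le]
      constructor <;> nlinarith [key1, key2]
    have := (mul_le_mul_iff_right₀ habpos).mp habs
    linarith [this]
end

section
/- (Cone constraint) Let x̂ minimize Σ_{t=1}^T ‖z_t − θ z_{t−1}‖₁/√{s_t} over all feasible sequences (z_t) containing the true sequence (x_t), with z_0 = x_0 = 0. Write h_t = x̂_t − x_t and d_t = h_t − θ h_{t−1}, and let w_t = x_t − θ x_{t−1} with S_t the support of the best s_t-term approximation of w_t. Then Σ_t ‖(d_t)_{S_t^c}‖₁/√{s_t} ≤ Σ_t ‖(d_t)_{S_t}‖₁/√{s_t} + 2 Σ_t σ_{s_t}(w_t)/√{s_t}. -/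
open Finset

theorem stmt9 {p : ℕ} (T : ℕ) (θ : ℝ) (s : ℕ → ℕ) (hs : ∀ t, 1 ≤ s t)
    (x xh w h d : ℕ → Fin p → ℝ)
    (hx0 : x 0 = 0) (hxh0 : xh 0 = 0)
    (hw : ∀ t, w t = x t - θ • x (t - 1))
    (hh : ∀ t, h t = xh t - x t)
    (hd : ∀ t, d t = h t - θ • h (t - 1))
    (S : ℕ → Finset (Fin p))
    (hScard : ∀ t, (S t).card = s t)
    (hSord : ∀ t, ∀ i ∈ S t, ∀ j ∉ S t, |w t j| ≤ |w t i|)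
    (hmin : ∑ t ∈ Finset.Icc 1 T, (∑ j, |xh t j - θ * xh (t - 1) j|) / Real.sqrt (s t) ≤
        ∑ t ∈ Finset.Icc 1 T, (∑ j, |x t j - θ * x (t - 1) j|) / Real.sqrt (s t)) :
    ∑ t ∈ Finset.Icc 1 T, (∑ j ∈ (S t)ᶜ, |d t j|) / Real.sqrt (s t) ≤
      ∑ t ∈ Finset.Icc 1 T, (∑ j ∈ S t, |d t j|) / Real.sqrt (s t) +
        2 * ∑ t ∈ Finset.Icc 1 T, (∑ j ∈ (S t)ᶜ, |w t j|) / Real.sqrt (s t) := by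
  have hsq : ∀ t : ℕ, (0:ℝ) < Real.sqrt (s t) := by
    intro t
    have : (0:ℝ) < (s t : ℝ) := by exact_mod_cast Nat.lt_of_lt_of_le Nat.zero_lt_one (hs t)
    exact Real.sqrt_pos.mpr this
  have hxw : ∀ t : ℕ, (∑ j, |x t j - θ * x (t - 1) j|)
      = (∑ j ∈ S t, |w t j|) + ∑ j ∈ (S t)ᶜ, |w t j| := by
    intro t
    rw [Finset.sum_add_sum_compl]
    refine Finset.sum_congr rfl fun j _ => ?_
    simp [hw t]
  have hwd : ∀ t : ℕ, ∀ j, xh t j - θ * xh (t - 1) j = w t j + d t j := by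
    intro t j
    simp only [hw t, hh, hd t, Pi.sub_apply, Pi.smul_apply, smul_eq_mul]
    ring
  have hkey : ∀ t ∈ Finset.Icc 1 T,
      ((∑ j ∈ S t, |w t j|) - (∑ j ∈ S t, |d t j|) + (∑ j ∈ (S t)ᶜ, |d t j|)
        - ∑ j ∈ (S t)ᶜ, |w t j|) / Real.sqrt (s t)
      ≤ (∑ j, |xh t j - θ * xh (t - 1) j|) / Real.sqrt (s t) := by
    intro t _
    rw [div_le_div_iff_of_pos_right (hsq t)]
    have e1 : (∑ j, |xh t j - θ * xh (t - 1) j|)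
        = (∑ j ∈ S t, |w t j + d t j|) + ∑ j ∈ (S t)ᶜ, |w t j + d t j| := by
      rw [Finset.sum_add_sum_compl]
      exact Finset.sum_congr rfl fun j _ => by rw [hwd t j]
    have e2 : (∑ j ∈ S t, |w t j|) - (∑ j ∈ S t, |d t j|) ≤ ∑ j ∈ S t, |w t j + d t j| := by
      rw [← Finset.sum_sub_distrib]
      refine Finset.sum_le_sum fun j _ => ?_
      have := abs_sub_abs_le_abs_sub (w t j) (-(d t j))
      simpa using this
    have e3 : (∑ j ∈ (S t)ᶜ, |d t j|) - (∑ j ∈ (S t)ᶜ, |w t j|)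
        ≤ ∑ j ∈ (S t)ᶜ, |w t j + d t j| := by
      rw [← Finset.sum_sub_distrib]
      refine Finset.sum_le_sum fun j _ => ?_
      have := abs_sub_abs_le_abs_sub (d t j) (-(w t j))
      simpa [add_comm] using this
    linarith
  have H : ∑ t ∈ Finset.Icc 1 T,
      (((∑ j ∈ S t, |w t j|) - (∑ j ∈ S t, |d t j|) + (∑ j ∈ (S t)ᶜ, |d t j|)
        - ∑ j ∈ (S t)ᶜ, |w t j|) / Real.sqrt (s t))
      ≤ ∑ t ∈ Finset.Icc 1 T,
        (((∑ j ∈ S t, |w t j|) + ∑ j ∈ (S t)ᶜ, |w t j|) / Real.sqrt (s t)) := by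
    refine (Finset.sum_le_sum hkey).trans (hmin.trans ?_)
    refine le_of_eq (Finset.sum_congr rfl fun t _ => ?_)
    rw [hxw t]
  rw [← sub_nonpos]
  have e : ∑ t ∈ Finset.Icc 1 T, (∑ j ∈ (S t)ᶜ, |d t j|) / Real.sqrt (s t) -
      (∑ t ∈ Finset.Icc 1 T, (∑ j ∈ S t, |d t j|) / Real.sqrt (s t) +
        2 * ∑ t ∈ Finset.Icc 1 T, (∑ j ∈ (S t)ᶜ, |w t j|) / Real.sqrt (s t))
      = ∑ t ∈ Finset.Icc 1 T,
      ((((∑ j ∈ S t, |w t j|) - (∑ j ∈ S t, |d t j|) + (∑ j ∈ (S t)ᶜ, |d t j|)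
        - ∑ j ∈ (S t)ᶜ, |w t j|) / Real.sqrt (s t))
        - (((∑ j ∈ S t, |w t j|) + ∑ j ∈ (S t)ᶜ, |w t j|) / Real.sqrt (s t))) := by
    rw [Finset.mul_sum, ← Finset.sum_add_distrib, ← Finset.sum_sub_distrib]
    refine Finset.sum_congr rfl fun t _ => ?_
    field_simp
    ring
  rw [e, Finset.sum_sub_distrib]
  exact sub_nonpos.mpr H
end
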